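/- arXiv:1605.06755 — 2 statements merged into one kernel-verified Lean document; each statement's English description precedes it below -/
import Mathlib

section
/- For a path connected finite T₀ space P there exists m ≥ 0 such that CC_m(P) ≤ cat(P × P), where cat denotes the (unreduced) Lusternik–Schnirelmann category. -/
open Set

/-- The finite fence poset `0 < 1 > 2 < ⋯ m` on `m+1` points. -/
def J (m : ℕ) : Type := Fin (m + 1)

namespace J

/-- The underlying natural number of a point of the fence. -/
def val {m : ℕ} (i : J m) : ℕ := @Fin.val (m + 1) i

instance (m : ℕ) : PartialOrder (J m) where
  le i j := i.val = j.val ∨ (j.val % 2 = 1 ∧ (j.val = i.val + 1 ∨ i.val = j.val + 1))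
  le_refl i := Or.inl rfl
  le_trans a b c h₁ h₂ := by
    show a.val = c.val ∨ (c.val % 2 = 1 ∧ (c.val = a.val + 1 ∨ a.val = c.val + 1))
    rcases h₁ with h₁ | h₁ <;> rcases h₂ with h₂ | h₂ <;> omega
  le_antisymm a b h₁ h₂ := by
    have : a.val = b.val := by rcases h₁ with h₁ | h₁ <;> rcases h₂ with h₂ | h₂ <;> omega
    exact @Fin.val_injective (m + 1) a b this

instance (m : ℕ) : Finite (J m) := inferInstanceAs (Finite (Fin (m + 1)))

/-- The initial point `0` of the fence. -/
def zero {m : ℕ} : J m := (0 : Fin (m + 1))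

/-- The terminal point `m` of the fence. -/
def last {m : ℕ} : J m := Fin.last m

end J

/-- The Alexandrov topology on a preordered set: open sets are the lower sets (ideals). -/
def alexTop (α : Type*) [Preorder α] : TopologicalSpace α where
  IsOpen s := IsLowerSet s
  isOpen_univ := isLowerSet_univ
  isOpen_inter _ _ := IsLowerSet.inter
  isOpen_sUnion _ := isLowerSet_sUnion

instance (m : ℕ) : TopologicalSpace (J m) := alexTop (J m)

/-- `P × P` can be covered by `n` open sets, each admitting a continuous section of
`q_m : P^{J_m} → P × P`, `γ ↦ (γ(0), γ(m))`. -/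
def hasCCCover (P : Type*) [TopologicalSpace P] (m n : ℕ) : Prop :=
  ∃ U : Fin n → Set (P × P), (∀ i, IsOpen (U i)) ∧ (⋃ i, U i) = Set.univ ∧
    ∀ i, ∃ s : C(U i, C(J m, P)),
      ∀ x : U i, (s x) J.zero = (x : P × P).1 ∧ (s x) J.last = (x : P × P).2

/-- The combinatorial complexity at length `m`. -/
noncomputable def CCm (P : Type*) [TopologicalSpace P] (m : ℕ) : ℕ∞ :=
  sInf ((↑) '' {n : ℕ | hasCCCover P m n})

/-- The combinatorial complexity `CC(P) = min_m CC_m(P)`. -/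
noncomputable def CC (P : Type*) [TopologicalSpace P] : ℕ∞ := ⨅ m, CCm P m

/-- `X × X` can be covered by `n` open sets, each admitting a continuous section of the
path fibration `X^I → X × X`. -/
def hasTCCover (X : Type*) [TopologicalSpace X] (n : ℕ) : Prop :=
  ∃ U : Fin n → Set (X × X), (∀ i, IsOpen (U i)) ∧ (⋃ i, U i) = Set.univ ∧
    ∀ i, ∃ s : C(U i, C(unitInterval, X)),
      ∀ x : U i, (s x) 0 = (x : X × X).1 ∧ (s x) 1 = (x : X × X).2

/-- Farber's topological complexity. -/
noncomputable def topComplexity (X : Type*) [TopologicalSpace X] : ℕ∞ :=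
  sInf ((↑) '' {n : ℕ | hasTCCover X n})

/-- A subset is contractible in the ambient space when its inclusion is null-homotopic. -/
def ContractibleIn {X : Type*} [TopologicalSpace X] (A : Set X) : Prop :=
  ∃ x₀ : X, ContinuousMap.Homotopic ⟨Subtype.val, continuous_subtype_val⟩
    (ContinuousMap.const A x₀)

/-- The (unreduced) Lusternik–Schnirelmann category. -/
noncomputable def cat (X : Type*) [TopologicalSpace X] : ℕ∞ :=
  sInf ((↑) '' {n : ℕ | ∃ U : Fin n → Set X, (∀ i, IsOpen (U i)) ∧ (⋃ i, U i) = Set.univ ∧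
    ∀ i, ContractibleIn (U i)})

/-!
Because `Iic p` is the smallest neighbourhood of `p` in a finite T₀ space, a homotopy
`H : I × U → P × P` on a finite `U` satisfies `H_u ≤ H_t` pointwise for all `u` near `t`.
As `I` is connected, the inclusion of a contractible `U` and a constant map are then joined by a
finite chain of pointwise comparable maps. Projecting to the factors, and joining the two
coordinates of the constant through the connected poset `P`, gives such a chain of continuous maps
`U → P` from `pr₁` to `pr₂`; read along the fence `J_m`, it is a continuous section of `q_m`.
Chains can be lengthened by constant steps, so a single `m` serves all members of a categorical
cover of `P × P`.
-/

open Relation Filter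
open scoped Topology

namespace J

@[simp] lemma val_zero {m : ℕ} : (J.zero : J m).val = 0 := rfl

@[simp] lemma val_last {m : ℕ} : (J.last : J m).val = m := rfl

instance (m : ℕ) : Topology.IsLowerSet (J m) := ⟨rfl⟩

end J

/-- A monotone map out of the infinite fence `0 < 1 > 2 < 3 > ⋯`. -/
def IsZigzag {Q : Type*} [Preorder Q] (g : ℕ → Q) : Prop :=
  ∀ k, g (2 * k) ≤ g (2 * k + 1) ∧ g (2 * k + 2) ≤ g (2 * k + 1)

section Zigzag

variable {Q R : Type*} [Preorder Q] [Preorder R] {g : ℕ → Q}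

lemma IsZigzag.comp_monotone (hg : IsZigzag g) {f : Q → R} (hf : Monotone f) :
    IsZigzag (f ∘ g) :=
  fun k => ⟨hf (hg k).1, hf (hg k).2⟩

lemma IsZigzag.monotone_fence (hg : IsZigzag g) (m : ℕ) : Monotone fun j : J m => g j.val := by
  rintro i j (h | ⟨hodd, hadj⟩)
  · simp only [h, le_refl]
  · obtain ⟨k, hj⟩ : ∃ k, j.val = 2 * k + 1 := ⟨j.val / 2, by omega⟩
    obtain hi | hi : i.val = 2 * k ∨ i.val = 2 * k + 2 := by omega
    · simpa only [hi, hj] using (hg k).1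
    · simpa only [hi, hj] using (hg k).2

theorem exists_isZigzag_of_eqvGen {x y : Q} (h : EqvGen (· ≤ ·) x y) :
    ∃ g : ℕ → Q, IsZigzag g ∧ g 0 = x ∧ ∀ᶠ n in atTop, g n = y := by
  rw [← EqvGen.reflTransGen_symmGen] at h
  induction h using ReflTransGen.head_induction_on with
  | refl => exact ⟨fun _ => y, fun _ => ⟨le_rfl, le_rfl⟩, rfl, .of_forall fun _ => rfl⟩
  | @head x x' hxx' _ ih =>
    obtain ⟨g, hg, rfl, hy⟩ := ih
    obtain ⟨t, hxt, hgt⟩ : ∃ t, x ≤ t ∧ g 0 ≤ t :=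
      hxx'.elim (fun h => ⟨_, h, le_rfl⟩) (fun h => ⟨_, le_rfl, h⟩)
    refine ⟨fun | 0 => x | 1 => t | n + 2 => g n, fun | 0 => ⟨hxt, hgt⟩ | k + 1 => hg k, rfl, ?_⟩
    filter_upwards [(tendsto_sub_atTop_nat 2).eventually hy, eventually_ge_atTop 2] with n hn h2
    obtain ⟨k, rfl⟩ : ∃ k, n = k + 2 := ⟨n - 2, by omega⟩
    simpa using hn

end Zigzag

theorem eqvGen_of_eventually_le {Y Q : Type*} [TopologicalSpace Y] [PreconnectedSpace Y]
    [Preorder Q] {f : Y → Q} (hf : ∀ y, ∀ᶠ u in 𝓝 y, f u ≤ f y) (y y' : Y) :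
    EqvGen (· ≤ ·) (f y) (f y') :=
  PreconnectedSpace.induction₂' (fun y y' => EqvGen (· ≤ ·) (f y) (f y'))
    (fun y => (hf y).mono fun _ hu => ⟨.symm _ _ (.rel _ _ hu), .rel _ _ hu⟩)
    ⟨fun _ _ _ => EqvGen.trans _ _ _⟩ y y'

lemma ContinuousMap.continuous_of_continuous_eval {X Y Z : Type*} [TopologicalSpace X]
    [TopologicalSpace Y] [TopologicalSpace Z] [Finite Y] {F : X → C(Y, Z)}
    (hF : ∀ y, Continuous fun x => F x y) : Continuous F := by
  rw [ContinuousMap.continuous_compactOpen]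
  intro K _ U hU
  have : {x | MapsTo (F x) K U} = ⋂ y ∈ K, (fun x => F x y) ⁻¹' U := by
    ext; simp [MapsTo]
  rw [this]
  exact K.toFinite.isOpen_biInter fun y _ => hU.preimage (hF y)

section LowerSetTopology

variable {P : Type*} [PartialOrder P] [TopologicalSpace P] [Topology.IsLowerSet P]

lemma eventually_le_of_continuous {Y : Type*} [TopologicalSpace Y] {f : Y → P}
    (hf : Continuous f) (y : Y) : ∀ᶠ u in 𝓝 y, f u ≤ f y := by
  have := hf.tendsto y
  rwa [Topology.IsLowerSet.nhds_eq_principal_Iic (f y), tendsto_principal] at this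

lemma eventually_le_of_continuous_eval {Y A : Type*} [TopologicalSpace Y] [TopologicalSpace A]
    [Finite A] {F : Y → C(A, P)} (hF : ∀ a, Continuous fun y => F y a) (y : Y) :
    ∀ᶠ u in 𝓝 y, F u ≤ F y := by
  simp_rw [ContinuousMap.le_def]
  exact eventually_all.2 fun a => eventually_le_of_continuous (hF a) y

theorem ContinuousMap.Homotopic.eqvGen_le {A : Type*} [TopologicalSpace A] [Finite A]
    {f₀ f₁ : C(A, P)} (h : f₀.Homotopic f₁) : EqvGen (· ≤ ·) f₀ f₁ := by
  obtain ⟨H⟩ := h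
  simpa using eqvGen_of_eventually_le
    (eventually_le_of_continuous_eval fun a => (continuous_eval_const a).comp H.curry.continuous)
    0 1

def IsZigzag.fencePaths {A : Type*} [TopologicalSpace A] {g : ℕ → C(A, P)} (hg : IsZigzag g)
    (m : ℕ) : C(A, C(J m, P)) where
  toFun a := ⟨fun j => g j.val a, Topology.IsLowerSet.monotone_iff_continuous.1 <|
    (hg.comp_monotone fun _ _ h => h a).monotone_fence m⟩
  continuous_toFun := ContinuousMap.continuous_of_continuous_eval fun j => (g j.val).continuous

@[simp] lemma IsZigzag.fencePaths_apply {A : Type*} [TopologicalSpace A] {g : ℕ → C(A, P)}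
    (hg : IsZigzag g) (m : ℕ) (a : A) (j : J m) : hg.fencePaths m a j = g j.val a :=
  rfl

theorem ContractibleIn.eventually_exists_section [Finite P] [PreconnectedSpace P]
    {U : Set (P × P)} (hU : ContractibleIn U) :
    ∀ᶠ m in atTop, ∃ s : C(U, C(J m, P)),
      ∀ x : U, s x J.zero = (x : P × P).1 ∧ s x J.last = (x : P × P).2 := by
  obtain ⟨z, hcontr⟩ := hU
  have hfst := ((ContinuousMap.Homotopic.refl ContinuousMap.fst).comp hcontr).eqvGen_le
  have hsnd := ((ContinuousMap.Homotopic.refl ContinuousMap.snd).comp hcontr).eqvGen_le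
  have hconst : EqvGen (· ≤ ·) (ContinuousMap.const U z.1) (ContinuousMap.const U z.2) :=
    eqvGen_of_eventually_le (eventually_le_of_continuous_eval fun _ => continuous_id) _ _
  simp only [ContinuousMap.comp_const] at hfst hsnd
  obtain ⟨g, hg, h0, hend⟩ :=
    exists_isZigzag_of_eqvGen (hfst.trans _ _ _ (hconst.trans _ _ _ (hsnd.symm _ _)))
  filter_upwards [hend] with m hm
  exact ⟨hg.fencePaths m, fun x => ⟨by simp [h0], by simp [hm]⟩⟩

end LowerSetTopology

/-- For a path connected finite space `P` there is `m` with
`CC_m(P) ≤ cat(P × P)`. -/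
theorem exists_CCm_le_cat
    (P : Type) [PartialOrder P] [Finite P] [TopologicalSpace P] [PathConnectedSpace P]
    (hP : ∀ s : Set P, IsOpen s ↔ IsLowerSet s) :
    ∃ m : ℕ, CCm P m ≤ cat (P × P) := by
  have : Topology.IsLowerSet P := ⟨TopologicalSpace.ext (funext fun s => propext (hP s))⟩
  by_cases htop : cat (P × P) = ⊤
  · exact ⟨0, htop ▸ le_top⟩
  obtain ⟨a, ha, -⟩ := sInf_lt_iff.1 (lt_top_iff_ne_top.2 htop)
  obtain ⟨n, ⟨U, hUo, hcov, hU⟩, hn⟩ := csInf_mem ⟨a, ha⟩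
  obtain ⟨m, hm⟩ := (eventually_all.2 fun i => (hU i).eventually_exists_section).exists
  choose s hs using hm
  have hcover : hasCCCover P m n := ⟨U, hUo, hcov, fun i => ⟨s i, hs i⟩⟩
  exact ⟨m, calc CCm P m ≤ n := sInf_le (mem_image_of_mem _ hcover)
    _ = cat (P × P) := hn⟩
end

section
/- Let P be the four-point poset {a, b, c, d} with a < c, a < d, b < c, b < d (the minimal finite model of the circle), with the Alexandrov topology. Then TC(P) = CC(P) = 4. -/
open Set

/-- The minimal finite model of the circle: points `a = (false,false)`, `b = (false,true)`
(minimal) and `c = (true,false)`, `d = (true,true)` (maximal), with `a,b < c,d`. -/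
def Circ : Type := Bool × Bool

namespace Circ

/-- `true` on the maximal points `c, d`; `false` on the minimal points `a, b`. -/
def level (x : Circ) : Bool := @Prod.fst Bool Bool x

instance : PartialOrder Circ where
  le x y := x = y ∨ (x.level = false ∧ y.level = true)
  le_refl x := Or.inl rfl
  le_trans a b c h₁ h₂ := by
    rcases h₁ with rfl | h₁
    · exact h₂
    · rcases h₂ with rfl | h₂
      · exact Or.inr h₁
      · exact Or.inr ⟨h₁.1, h₂.2⟩
  le_antisymm a b h₁ h₂ := by
    rcases h₁ with rfl | h₁
    · rfl
    · rcases h₂ with rfl | h₂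
      · rfl
      · exact absurd h₁.2 (by simp [h₂.1])

instance : Finite Circ := inferInstanceAs (Finite (Bool × Bool))

instance : TopologicalSpace Circ := alexTop Circ

def a : Circ := ((false, false) : Bool × Bool)
def b : Circ := ((false, true) : Bool × Bool)
def c : Circ := ((true, false) : Bool × Bool)
def d : Circ := ((true, true) : Bool × Bool)

end Circ

/-! Open sets of an Alexandrov space are its down-sets, and continuous maps between Alexandrov
spaces (including products and subspaces of them) are exactly the monotone maps.

Upper bound: over the open set `Iic (u, v)`, `u, v ∈ {c, d}`, the zigzag `x ≤ u ≥ a ≤ v ≥ y` is a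
continuous section of `q₄`, and these four sets cover `P × P`. Precomposing with a path from `0` to
`4` in the fence `J 4` turns combinatorial sections into path-fibration sections, so
`TC(P) ≤ CC(P) ≤ 4`.

Lower bound: a section `s` over an open `U` is monotone in the base point. If `U` contains two
maximal points `M₁ ≠ M₂`, say with different second coordinates, it also contains `(b, a)` and
`(a, b)`. At the end of the paths, `(s M₁, s M₂, s (b, a), s (a, b))` takes the value `(c, d, a, b)`
up to order, which is comparable with no other value satisfying `s (b, a), s (a, b) ≤ s M₁, s M₂`.
By connectedness the quadruple is then constant along the path, so `s (b, a)` would start at `a`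
instead of `b`. Hence each of the four maximal points of `P × P` needs its own open set. -/

open Filter

namespace Topology.IsLowerSet

variable {α β : Type*} [Preorder α] [Preorder β] [TopologicalSpace α] [TopologicalSpace β]
  [Topology.IsLowerSet α]

instance instProd [Topology.IsLowerSet β] : Topology.IsLowerSet (α × β) :=
  Topology.isLowerSet_iff_nhds.mpr fun p => by
    rw [nhds_prod_eq, nhds_eq_principal_Iic, nhds_eq_principal_Iic, prod_principal_principal,
      Iic_prod_Iic]

instance instSubtype (p : α → Prop) : Topology.IsLowerSet (Subtype p) :=
  Topology.isLowerSet_iff_nhds.mpr fun x => by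
    rw [nhds_induced, nhds_eq_principal_Iic, comap_principal]
    rfl

theorem joined_of_le {x y : α} (h : x ≤ y) : Joined x y :=
  (specializes_iff_le.mpr h).joinedIn (mem_univ x) (mem_univ y) |>.joined

theorem apply_eq_of_comparable_imp_eq {T : Type*} [TopologicalSpace T] [PreconnectedSpace T]
    {f : T → α} (hf : Continuous f) {z : α} (hz : ∀ t, f t ≤ z ∨ z ≤ f t → f t = z) {t₀ : T}
    (h₀ : f t₀ = z) (t : T) : f t = z := by
  have hIic : f ⁻¹' {z} = f ⁻¹' Iic z :=
    Set.ext fun t => ⟨fun h => le_of_eq h, fun h => hz t (Or.inl h)⟩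
  have hIci : f ⁻¹' {z} = f ⁻¹' Ici z :=
    Set.ext fun t => ⟨fun h => ge_of_eq h, fun h => hz t (Or.inr h)⟩
  have hclopen : IsClopen (f ⁻¹' {z}) :=
    ⟨hIci ▸ (isClosed_iff_isUpper.mpr (isUpperSet_Ici z)).preimage hf,
      hIic ▸ (isOpen_iff_isLowerSet.mpr (isLowerSet_Iic z)).preimage hf⟩
  exact Set.eq_univ_iff_forall.mp (hclopen.eq_univ ⟨t₀, h₀⟩) t

end Topology.IsLowerSet

instance (m : ℕ) : Topology.IsLowerSet (J m) := ⟨rfl⟩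

instance : Topology.IsLowerSet Circ := ⟨rfl⟩

namespace J

theorem joined_zero_last (m : ℕ) : Joined (zero : J m) last := by
  suffices h : ∀ k (hk : k < m + 1), Joined (zero : J m) (⟨k, hk⟩ : Fin (m + 1)) from
    h m m.lt_succ_self
  intro k
  induction k with
  | zero => exact fun _ => Joined.refl _
  | succ k ih =>
    intro hk
    refine (ih (by omega)).trans ?_
    rcases Nat.mod_two_eq_zero_or_one k with hk' | hk'
    · exact Topology.IsLowerSet.joined_of_le (Or.inr ⟨by simp only [val]; omega, Or.inl rfl⟩)
    · exact (Topology.IsLowerSet.joined_of_le (Or.inr ⟨by simp only [val]; omega, Or.inr rfl⟩)).symm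

end J

theorem hasTCCover_of_hasCCCover {P : Type*} [TopologicalSpace P] {m n : ℕ}
    (h : hasCCCover P m n) : hasTCCover P n := by
  obtain ⟨U, hopen, hcover, hsec⟩ := h
  let γ := (J.joined_zero_last m).somePath
  refine ⟨U, hopen, hcover, fun i => ?_⟩
  obtain ⟨s, hs⟩ := hsec i
  exact ⟨(ContinuousMap.compRightContinuousMap P γ.toContinuousMap).comp s,
    fun x => by simpa using hs x⟩

theorem topComplexity_le_CC (X : Type*) [TopologicalSpace X] : topComplexity X ≤ CC X :=
  le_iInf fun _ => sInf_le_sInf <| Set.image_mono fun _ => hasTCCover_of_hasCCCover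

section Zigzag

variable {P : Type*} [Preorder P]

def zigzag (x u w v y : P) : J 4 → P := ![x, u, w, v, y]

theorem zigzag_monotone {x u w v y : P} (hx : x ≤ u) (hwu : w ≤ u) (hwv : w ≤ v) (hy : y ≤ v) :
    Monotone (zigzag x u w v y) := by
  rintro ⟨i, hi⟩ ⟨j, hj⟩ (hij | ⟨hodd, hij⟩)
  · cases hij
    exact le_rfl
  · change j % 2 = 1 at hodd
    change j = i + 1 ∨ i = j + 1 at hij
    interval_cases j <;> interval_cases i <;> simp_all [zigzag]

theorem zigzag_monotone_endpoints (u w v : P) (k : J 4) :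
    Monotone fun p : P × P => zigzag p.1 u w v p.2 k := by
  rintro p q ⟨h₁, h₂⟩
  obtain ⟨k, hk⟩ := k
  interval_cases k <;> simp_all [zigzag]

theorem exists_zigzag_section [TopologicalSpace P] [Topology.IsLowerSet P] {u w v : P}
    (hwu : w ≤ u) (hwv : w ≤ v) :
    ∃ s : C(Iic (u, v), C(J 4, P)),
      ∀ x : Iic (u, v), s x J.zero = (x : P × P).1 ∧ s x J.last = (x : P × P).2 := by
  let F : Iic (u, v) × J 4 → P := fun p => zigzag p.1.1.1 u w v p.1.1.2 p.2
  have hF : Monotone F := monotone_prod_iff.mpr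
    ⟨fun x => zigzag_monotone x.2.1 hwu hwv x.2.2,
      fun k => (zigzag_monotone_endpoints u w v k).comp fun _ _ h => h⟩
  exact ⟨ContinuousMap.curry ⟨F, Topology.IsLowerSet.monotone_iff_continuous.mp hF⟩,
    fun _ => ⟨rfl, rfl⟩⟩

end Zigzag

theorem hasCCCover_four_of_common_lower_bound {P : Type*} [Preorder P] [TopologicalSpace P]
    [Topology.IsLowerSet P] {k : ℕ} (M : Fin k → P) (w : P) (hw : ∀ i, w ≤ M i)
    (hM : ∀ x, ∃ i, x ≤ M i) : hasCCCover P 4 (k * k) := by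
  let corner : Fin (k * k) → P × P := fun j =>
    (M (finProdFinEquiv.symm j).1, M (finProdFinEquiv.symm j).2)
  refine ⟨fun j => Iic (corner j), fun j => Topology.IsLowerSet.isOpen_iff_isLowerSet.mpr
    (isLowerSet_Iic _), Set.eq_univ_of_forall fun x => ?_, fun j =>
    exists_zigzag_section (hw _) (hw _)⟩
  obtain ⟨i₁, h₁⟩ := hM x.1
  obtain ⟨i₂, h₂⟩ := hM x.2
  refine Set.mem_iUnion.mpr ⟨finProdFinEquiv (i₁, i₂), ?_⟩
  show x ≤ corner _
  simp only [corner, Equiv.symm_apply_apply]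
  exact ⟨h₁, h₂⟩

theorem ContinuousMap.apply_le_apply_of_le {X T P : Type*} [Preorder X] [TopologicalSpace X]
    [Topology.IsLowerSet X] [Preorder P] [TopologicalSpace P] [Topology.IsLowerSet P]
    [TopologicalSpace T] (s : C(X, C(T, P))) {x y : X} (h : x ≤ y) (t : T) : s x t ≤ s y t :=
  Topology.IsLowerSet.monotone_iff_continuous.mpr
    ((continuous_eval_const t).comp s.continuous) h

namespace Circ

instance : DecidableEq Circ := inferInstanceAs (DecidableEq (Bool × Bool))

instance : Fintype Circ := inferInstanceAs (Fintype (Bool × Bool))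

instance : DecidableLE Circ := fun x y =>
  inferInstanceAs (Decidable (x = y ∨ (x.level = false ∧ y.level = true)))

/-- The maximal points: `maxPt false = c` and `maxPt true = d`. -/
def maxPt (v : Bool) : Circ := ((true, v) : Bool × Bool)

theorem eq_maxPt_config_of_comparable :
    ∀ (v : Bool) (p q r s : Circ), r ≤ p → r ≤ q → s ≤ p → s ≤ q →
    ((p, q, r, s) ≤ (maxPt v, maxPt !v, a, b) ∨ (maxPt v, maxPt !v, a, b) ≤ (p, q, r, s)) →
    (p, q, r, s) = (maxPt v, maxPt !v, a, b) := by
  decide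

theorem eq_a_of_paths {T : Type*} [TopologicalSpace T] [PreconnectedSpace T]
    {α β γ δ : C(T, Circ)} (hγα : ∀ t, γ t ≤ α t) (hγβ : ∀ t, γ t ≤ β t)
    (hδα : ∀ t, δ t ≤ α t) (hδβ : ∀ t, δ t ≤ β t) {v : Bool} {t₀ : T}
    (h₀ : (α t₀, β t₀, γ t₀, δ t₀) = (maxPt v, maxPt !v, a, b)) (t : T) : γ t = a :=
  congrArg (·.2.2.1) <| Topology.IsLowerSet.apply_eq_of_comparable_imp_eq (by fun_prop)
    (fun t => eq_maxPt_config_of_comparable v _ _ _ _ (hγα t) (hγβ t) (hδα t) (hδβ t)) h₀ t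

theorem false_of_section_of_maxPt_mem {T : Type*} [TopologicalSpace T] [PreconnectedSpace T]
    {E E' : T} {U : Set (Circ × Circ)} (hU : IsOpen U) (s : C(U, C(T, Circ)))
    (hs : ∀ x : U, s x E = (x : Circ × Circ).1 ∧ s x E' = (x : Circ × Circ).2)
    {p q : Bool × Bool} (hpq : p ≠ q) (hp : (maxPt p.1, maxPt p.2) ∈ U)
    (hq : (maxPt q.1, maxPt q.2) ∈ U) : False := by
  have hmin : ∀ v w : Bool, ((a, b) : Circ × Circ) ≤ (maxPt v, maxPt w) ∧
      ((b, a) : Circ × Circ) ≤ (maxPt v, maxPt w) := by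
    decide
  have hlow := Topology.IsLowerSet.isOpen_iff_isLowerSet.mp hU
  let P' : U := ⟨_, hp⟩
  let Q' : U := ⟨_, hq⟩
  let μ : U := ⟨(a, b), hlow (hmin _ _).1 hp⟩
  let ν : U := ⟨(b, a), hlow (hmin _ _).2 hp⟩
  have mono := fun {x y : U} (h : (x : Circ × Circ) ≤ y) t => s.apply_le_apply_of_le h t
  obtain ⟨p₁, p₂⟩ := p
  obtain ⟨q₁, q₂⟩ := q
  by_cases h₂ : p₂ = q₂
  · obtain rfl : q₁ = !p₁ := by cases p₁ <;> cases q₁ <;> simp_all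
    have := eq_a_of_paths (α := s P') (β := s Q') (γ := s μ) (δ := s ν)
      (mono (hmin _ _).1) (mono (hmin _ _).1) (mono (hmin _ _).2) (mono (hmin _ _).2)
      (t₀ := E) (v := p₁) (by simp [P', Q', μ, ν, hs]) E'
    exact absurd (by simpa [μ, hs] using this) (by decide : b ≠ a)
  · obtain rfl : q₂ = !p₂ := by cases p₂ <;> cases q₂ <;> simp_all
    have := eq_a_of_paths (α := s P') (β := s Q') (γ := s ν) (δ := s μ)
      (mono (hmin _ _).2) (mono (hmin _ _).2) (mono (hmin _ _).1) (mono (hmin _ _).1)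
      (t₀ := E') (v := p₂) (by simp [P', Q', μ, ν, hs]) E
    exact absurd (by simpa [ν, hs] using this) (by decide : b ≠ a)

theorem four_le_of_hasTCCover {n : ℕ} (h : hasTCCover Circ n) : 4 ≤ n := by
  obtain ⟨U, hopen, hcover, hsec⟩ := h
  have hmem (p : Bool × Bool) : ∃ i, (maxPt p.1, maxPt p.2) ∈ U i :=
    Set.mem_iUnion.mp (hcover ▸ mem_univ _)
  choose f hf using hmem
  by_contra! hn
  obtain ⟨p, q, hpq, hfpq⟩ := Fintype.exists_ne_map_eq_of_card_lt f (by simpa using hn)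
  obtain ⟨s, hs⟩ := hsec (f p)
  exact false_of_section_of_maxPt_mem (hopen _) s hs hpq (hf p) (hfpq ▸ hf q)

theorem hasCCCover_four : hasCCCover Circ 4 4 :=
  hasCCCover_four_of_common_lower_bound ![c, d] a (by decide) (by decide)

end Circ

/-- For the four-point minimal finite model `P = {a,b,c,d}` of the circle
(`a, b < c, d`) with the Alexandrov topology, `TC(P) = CC(P) = 4`. -/
theorem TC_and_CC_of_circle_model :
    topComplexity Circ = 4 ∧ CC Circ = 4 := by
  have hlower : 4 ≤ topComplexity Circ := le_sInf <| by
    rintro _ ⟨n, hn, rfl⟩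
    exact_mod_cast Circ.four_le_of_hasTCCover hn
  have hupper : CC Circ ≤ 4 := (iInf_le _ 4).trans (sInf_le ⟨4, Circ.hasCCCover_four, rfl⟩)
  have hTC_CC := topComplexity_le_CC Circ
  exact ⟨le_antisymm (hTC_CC.trans hupper) hlower, le_antisymm hupper (hlower.trans hTC_CC)⟩
end
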